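/- Let E be a real inner product space, let T ≥ 1 be a natural number, let μ₀ > 0, σ > 0 and Δ > 0, and let L : E → ℝ be differentiable and satisfy ⟨∇L(x), x − y⟩ ≥ L(x) − L(y) + (μ₀/2)·‖x − y‖² for all x, y ∈ E. Let θ* ∈ E, and let θ_0, θ_1, …, θ_T ∈ E satisfy θ_{t+1} = θ_t − α_t·g_t for t = 0, …, T−1, where α_t = 2/(μ₀(t+1)), each g_t ∈ E satisfies ‖g_t‖ ≤ σ, and ‖θ_t − θ*‖ ≤ Δ for all t = 0, …, T−1. Then ∑_{t=0}^{T−1} t·(L(θ_t) − L(θ*)) ≤ σ²·T/μ₀ + ∑_{t=0}^{T−1} t·Δ·‖∇L(θ_t) − g_t‖. -/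

import Mathlib

/-!
Strong convexity at `θ t` bounds the gap `L (θ t) - L θ*` by `⟪g t, θ t - θ*⟫` plus the gradient
error term, and expanding `‖θ (t+1) - θ*‖²` along the step expresses `⟪g t, θ t - θ*⟫` through the
two distances and `α_t ‖g t‖²`. With `α_t = 2/(μ₀(t+1))` and weight `t`, the distance terms become
`μ₀/4 · (t(t-1)‖θ t - θ*‖² - (t+1)t‖θ (t+1) - θ*‖²)`, which telescope to
`-μ₀/4 · T(T-1)‖θ T - θ*‖² ≤ 0`, while the step-size terms contribute `σ²/μ₀ · t/(t+1) ≤ σ²/μ₀`.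
-/

open scoped RealInnerProductSpace

open Finset

section DescentStep

variable {E : Type*} [NormedAddCommGroup E] [InnerProductSpace ℝ E]

theorem norm_sub_smul_sub_sq (x y g : E) (α : ℝ) :
    ‖x - α • g - y‖ ^ 2 = ‖x - y‖ ^ 2 - 2 * α * ⟪g, x - y⟫ + α ^ 2 * ‖g‖ ^ 2 := by
  rw [sub_right_comm, norm_sub_sq_real, real_inner_smul_right, real_inner_comm, norm_smul,
    Real.norm_eq_abs, mul_pow, sq_abs]
  ring

/-- `v` stands for the exact gradient at `x`, `a` for the gap `L x - L y`, and `g` for the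
approximate gradient used in the step `x - α • g`. -/
theorem gap_le_of_descent_step {x y v g : E} {a μ α : ℝ} (hα : 0 < α)
    (hsc : a + μ / 2 * ‖x - y‖ ^ 2 ≤ ⟪v, x - y⟫) :
    a ≤ (1 / (2 * α) - μ / 2) * ‖x - y‖ ^ 2 - 1 / (2 * α) * ‖x - α • g - y‖ ^ 2
      + α / 2 * ‖g‖ ^ 2 + ⟪v - g, x - y⟫ := by
  have hinner : ⟪g, x - y⟫
      = 1 / (2 * α) * (‖x - y‖ ^ 2 - ‖x - α • g - y‖ ^ 2) + α / 2 * ‖g‖ ^ 2 := by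
    rw [norm_sub_smul_sub_sq]
    field_simp
    ring
  rw [inner_sub_left, hinner]
  linarith

theorem weighted_gap_le_of_decaying_step {x y v g : E} {a μ σ Δ : ℝ} (t : ℕ) (hμ : 0 < μ)
    (hsc : a + μ / 2 * ‖x - y‖ ^ 2 ≤ ⟪v, x - y⟫) (hg : ‖g‖ ≤ σ) (hx : ‖x - y‖ ≤ Δ) :
    t * a ≤ μ / 4 * (t * (t - 1) * ‖x - y‖ ^ 2
        - (t + 1) * t * ‖x - (2 / (μ * (t + 1))) • g - y‖ ^ 2)
      + σ ^ 2 / μ * (t / (t + 1)) + t * Δ * ‖v - g‖ := by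
  have hα : 0 < 2 / (μ * (t + 1)) := by positivity
  have hstep := mul_le_mul_of_nonneg_left (gap_le_of_descent_step (g := g) hα hsc) t.cast_nonneg
  have hgσ : ‖g‖ ^ 2 ≤ σ ^ 2 := pow_le_pow_left₀ (norm_nonneg g) hg 2
  have herr : ⟪v - g, x - y⟫ ≤ Δ * ‖v - g‖ :=
    (real_inner_le_norm _ _).trans (by rw [mul_comm]; gcongr)
  have hσ_term : (t : ℝ) * (2 / (μ * (t + 1)) / 2 * ‖g‖ ^ 2) ≤ σ ^ 2 / μ * (t / (t + 1)) := by
    calc (t : ℝ) * (2 / (μ * (t + 1)) / 2 * ‖g‖ ^ 2)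
        = 1 / μ * (t / (t + 1)) * ‖g‖ ^ 2 := by field_simp
      _ ≤ 1 / μ * (t / (t + 1)) * σ ^ 2 := by gcongr
      _ = σ ^ 2 / μ * (t / (t + 1)) := by ring
  have hdist : (t : ℝ) * ((1 / (2 * (2 / (μ * (t + 1)))) - μ / 2) * ‖x - y‖ ^ 2
      - 1 / (2 * (2 / (μ * (t + 1)))) * ‖x - (2 / (μ * (t + 1))) • g - y‖ ^ 2)
      = μ / 4 * (t * (t - 1) * ‖x - y‖ ^ 2
        - (t + 1) * t * ‖x - (2 / (μ * (t + 1))) • g - y‖ ^ 2) := by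
    field_simp
    ring
  linarith [mul_le_mul_of_nonneg_left herr t.cast_nonneg]

end DescentStep

theorem sum_range_div_succ_le (T : ℕ) : ∑ t ∈ range T, (t : ℝ) / (t + 1) ≤ T := by
  calc ∑ t ∈ range T, (t : ℝ) / (t + 1) ≤ ∑ _t ∈ range T, (1 : ℝ) :=
        sum_le_sum fun t _ => div_le_one_of_le₀ (by linarith) (by positivity)
    _ = T := by simp

theorem approx_gd_weighted_sum_bound_strongly_convex_general
    {E : Type*} [NormedAddCommGroup E] [InnerProductSpace ℝ E]
    (T : ℕ)
    (μ₀ σ Δ : ℝ) (hμ₀ : 0 < μ₀)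
    (L : E → ℝ) (gradL : E → E)
    (hsc : ∀ x y : E, ⟪gradL x, x - y⟫ ≥ L x - L y + (μ₀ / 2) * ‖x - y‖ ^ 2)
    (θstar : E) (θ g : ℕ → E)
    (hupd : ∀ t < T, θ (t + 1) = θ t - (2 / (μ₀ * (t + 1))) • g t)
    (hg : ∀ t < T, ‖g t‖ ≤ σ)
    (hθ : ∀ t < T, ‖θ t - θstar‖ ≤ Δ) :
    ∑ t ∈ Finset.range T, (t : ℝ) * (L (θ t) - L θstar)
      ≤ σ ^ 2 * T / μ₀
        + ∑ t ∈ Finset.range T, (t : ℝ) * Δ * ‖gradL (θ t) - g t‖ := by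
  set D : ℕ → ℝ := fun t => t * (t - 1) * ‖θ t - θstar‖ ^ 2
  have hstep : ∀ t ∈ range T, (t : ℝ) * (L (θ t) - L θstar)
      ≤ μ₀ / 4 * (D t - D (t + 1)) + σ ^ 2 / μ₀ * (t / (t + 1))
        + t * Δ * ‖gradL (θ t) - g t‖ := by
    intro t ht
    have ht := mem_range.mp ht
    have h := weighted_gap_le_of_decaying_step t hμ₀ (hsc (θ t) θstar).le (hg t ht) (hθ t ht)
    simpa only [D, hupd t ht, Nat.cast_succ, add_sub_cancel_right, mul_comm ((t : ℝ) + 1)] using h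
  have hD_last : 0 ≤ D T := by
    rcases T with _ | T <;> simp only [D, Nat.cast_succ, add_sub_cancel_right] <;> positivity
  calc ∑ t ∈ range T, (t : ℝ) * (L (θ t) - L θstar)
      ≤ ∑ t ∈ range T, (μ₀ / 4 * (D t - D (t + 1)) + σ ^ 2 / μ₀ * (t / (t + 1))
        + t * Δ * ‖gradL (θ t) - g t‖) := sum_le_sum hstep
    _ = μ₀ / 4 * (D 0 - D T) + σ ^ 2 / μ₀ * ∑ t ∈ range T, (t : ℝ) / (t + 1)
        + ∑ t ∈ range T, (t : ℝ) * Δ * ‖gradL (θ t) - g t‖ := by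
      rw [sum_add_distrib, sum_add_distrib, ← mul_sum, ← mul_sum, sum_range_sub']
    _ ≤ μ₀ / 4 * (0 - 0) + σ ^ 2 / μ₀ * T
        + ∑ t ∈ range T, (t : ℝ) * Δ * ‖gradL (θ t) - g t‖ := by
      gcongr
      · simp [D]
      · exact sum_range_div_succ_le T
    _ = σ ^ 2 * T / μ₀ + ∑ t ∈ range T, (t : ℝ) * Δ * ‖gradL (θ t) - g t‖ := by ring

/-- Summed weighted bound for approximate gradient descent on a strongly convex objective
with decaying learning rate `α_t = 2/(μ₀(t+1))`. -/
theorem approx_gd_weighted_sum_bound_strongly_convex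
    {E : Type*} [NormedAddCommGroup E] [InnerProductSpace ℝ E]
    (T : ℕ) (hT : 1 ≤ T)
    (μ₀ σ Δ : ℝ) (hμ₀ : 0 < μ₀) (hσ : 0 < σ) (hΔ : 0 < Δ)
    (L : E → ℝ) (gradL : E → E)
    (hgrad : ∀ x, HasFDerivAt L (innerSL ℝ (gradL x)) x)
    (hsc : ∀ x y : E, ⟪gradL x, x - y⟫ ≥ L x - L y + (μ₀ / 2) * ‖x - y‖ ^ 2)
    (θstar : E) (θ g : ℕ → E)
    (hupd : ∀ t < T, θ (t + 1) = θ t - (2 / (μ₀ * (t + 1))) • g t)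
    (hg : ∀ t < T, ‖g t‖ ≤ σ)
    (hθ : ∀ t < T, ‖θ t - θstar‖ ≤ Δ) :
    ∑ t ∈ Finset.range T, (t : ℝ) * (L (θ t) - L θstar)
      ≤ σ ^ 2 * T / μ₀
        + ∑ t ∈ Finset.range T, (t : ℝ) * Δ * ‖gradL (θ t) - g t‖ :=
  approx_gd_weighted_sum_bound_strongly_convex_general T μ₀ σ Δ hμ₀ L gradL hsc θstar θ g hupd hg hθ
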